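/- arXiv:2002.06262 — 2 statements merged into one kernel-verified Lean document; each statement's English description precedes it below -/
import Mathlib

section
/- Fix K₀ ∈ [-1,1) and define K_ℓ = σ̂(K_{ℓ-1}) with σ̂(ρ) = (√(1-ρ²) + (π - arccos ρ)·ρ)/π. Then there exists a constant C > 0 such that 1 - K_ℓ ≤ C/ℓ² for all ℓ ≥ 1. -/
/- Writing `ρ = cos θ`, one has `1 - σ̂(ρ) = (1 - ρ) - (sin θ - θ cos θ) / π`. Jordan's inequality
gives `sin θ - θ cos θ ≥ 2θ³ / (3π)` on `[0, π/2]`, and `1 - ρ ≤ θ² / 2`, so `ε = 1 - ρ` obeys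
`ε' ≤ ε - ε^{3/2} / 6` once the iterates lie in `[0, 1]` (which happens after one step). Such a
recursion forces `ε_ℓ ≤ 36² / ℓ²`: if `ε_ℓ` is already below `36² / (ℓ + 1)²` the claim persists,
and otherwise the decrement `ε_ℓ^{3/2} / 6` is large enough to make up the difference. -/

open Real

/-- Dual activation of the normalized ReLU. -/
noncomputable def hatSigma (ρ : ℝ) : ℝ :=
  (Real.sqrt (1 - ρ ^ 2) + (π - Real.arccos ρ) * ρ) / π

lemma mul_cube_le_sin_sub_mul_cos {φ : ℝ} (h0 : 0 ≤ φ) (h1 : φ ≤ π / 2) :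
    2 / (3 * π) * φ ^ 3 ≤ sin φ - φ * cos φ := by
  set f : ℝ → ℝ := fun x ↦ sin x - x * cos x - 2 / (3 * π) * x ^ 3
  have hf : ∀ x, HasDerivAt f (x * (sin x - 2 / π * x)) x := by
    intro x
    refine (((hasDerivAt_sin x).sub ((hasDerivAt_id' x).mul (hasDerivAt_cos x))).sub
      ((hasDerivAt_pow 3 x).const_mul (2 / (3 * π)))).congr_deriv ?_
    field_simp
    ring
  have hmono : MonotoneOn f (Set.Icc 0 (π / 2)) := by
    refine monotoneOn_of_deriv_nonneg (convex_Icc _ _)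
      (fun x _ ↦ (hf x).continuousAt.continuousWithinAt)
      (fun x _ ↦ (hf x).differentiableAt.differentiableWithinAt) fun x hx ↦ ?_
    rw [interior_Icc] at hx
    rw [(hf x).deriv]
    exact mul_nonneg hx.1.le (sub_nonneg.2 (mul_le_sin hx.1.le hx.2.le))
  have := hmono ⟨le_rfl, by positivity⟩ ⟨h0, h1⟩ h0
  simp only [f, sin_zero, cos_zero] at this
  linarith

lemma hatSigma_cos {θ : ℝ} (h0 : 0 ≤ θ) (hπ : θ ≤ π) :
    hatSigma (cos θ) = (sin θ + (π - θ) * cos θ) / π := by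
  rw [hatSigma, arccos_cos h0 hπ, ← sin_eq_sqrt_one_sub_cos_sq h0 hπ]

lemma hatSigma_nonneg {ρ : ℝ} (h₁ : -1 ≤ ρ) (h₂ : ρ ≤ 1) : 0 ≤ hatSigma ρ := by
  obtain ⟨θ, ⟨h0, hπ⟩, rfl⟩ : ∃ θ ∈ Set.Icc 0 π, cos θ = ρ :=
    ⟨arccos ρ, ⟨arccos_nonneg ρ, arccos_le_pi ρ⟩, cos_arccos h₁ h₂⟩
  rw [hatSigma_cos h0 hπ]
  refine div_nonneg ?_ pi_pos.le
  rcases le_total θ (π / 2) with hθ | hθ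
  · have := cos_nonneg_of_mem_Icc ⟨by linarith, hθ⟩
    have := sin_nonneg_of_nonneg_of_le_pi h0 hπ
    have : 0 ≤ π - θ := by linarith
    positivity
  · -- with `φ = π - θ ∈ [0, π/2]` the numerator is `sin φ - φ cos φ`
    have key := mul_cube_le_sin_sub_mul_cos (φ := π - θ) (by linarith) (by linarith)
    rw [sin_pi_sub, cos_pi_sub] at key
    have : 0 ≤ 2 / (3 * π) * (π - θ) ^ 3 := by
      have : 0 ≤ π - θ := by linarith
      positivity
    linarith

lemma hatSigma_le_one {ρ : ℝ} (h₁ : -1 ≤ ρ) (h₂ : ρ ≤ 1) : hatSigma ρ ≤ 1 := by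
  obtain ⟨θ, ⟨h0, hπ⟩, rfl⟩ : ∃ θ ∈ Set.Icc 0 π, cos θ = ρ :=
    ⟨arccos ρ, ⟨arccos_nonneg ρ, arccos_le_pi ρ⟩, cos_arccos h₁ h₂⟩
  rw [hatSigma_cos h0 hπ, div_le_one pi_pos]
  nlinarith [sin_le h0, cos_le_one θ]

lemma one_sub_hatSigma_le {ρ : ℝ} (h₀ : 0 ≤ ρ) (h₁ : ρ ≤ 1) :
    1 - hatSigma ρ ≤ (1 - ρ) - (1 - ρ) * √(1 - ρ) / 6 := by
  obtain ⟨θ, ⟨h0, hθ⟩, rfl⟩ : ∃ θ ∈ Set.Icc 0 (π / 2), cos θ = ρ :=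
    ⟨arccos ρ, ⟨arccos_nonneg ρ, arccos_le_pi_div_two.2 h₀⟩, cos_arccos (by linarith) h₁⟩
  have hπ := pi_pos
  have hε : 1 - cos θ ≤ θ ^ 2 / 2 := by linarith [one_sub_sq_div_two_le_cos (x := θ)]
  -- `5 / 7` is a rational upper bound for `1 / √2`
  have hsqrt : √(1 - cos θ) ≤ 5 / 7 * θ := sqrt_le_iff.2 ⟨by positivity, by nlinarith⟩
  have hε3 : (1 - cos θ) * √(1 - cos θ) ≤ θ ^ 2 / 2 * (5 / 7 * θ) :=
    mul_le_mul hε hsqrt (sqrt_nonneg _) (by positivity)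
  have hπsq : π ^ 2 ≤ 11 := by nlinarith [pi_lt_d2]
  have hcube : 5 / 84 * θ ^ 3 ≤ 2 / (3 * π) * θ ^ 3 / π := by
    have hconst : 5 / 84 ≤ 2 / (3 * π ^ 2) := by
      rw [le_div_iff₀ (by positivity)]
      linarith
    calc 5 / 84 * θ ^ 3 ≤ 2 / (3 * π ^ 2) * θ ^ 3 := by gcongr
      _ = 2 / (3 * π) * θ ^ 3 / π := by field_simp
  have key : 2 / (3 * π) * θ ^ 3 / π ≤ (sin θ - θ * cos θ) / π :=
    div_le_div_of_nonneg_right (mul_cube_le_sin_sub_mul_cos h0 hθ) hπ.le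
  have hsplit : 1 - (sin θ + (π - θ) * cos θ) / π = (1 - cos θ) - (sin θ - θ * cos θ) / π := by
    field_simp
    ring
  rw [hatSigma_cos h0 (by linarith), hsplit]
  linarith

lemma inv_sq_sub_inv_succ_sq_le {x : ℝ} (hx : 1 ≤ x) :
    1 / x ^ 2 - 1 / (x + 1) ^ 2 ≤ 6 / (x + 1) ^ 3 := by
  rw [div_sub_div _ _ (by positivity) (by positivity), div_le_div_iff₀ (by positivity)
    (by positivity)]
  nlinarith [mul_nonneg (by linarith : (0 : ℝ) ≤ 4 * x + 1) (by linarith : (0 : ℝ) ≤ x - 1),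
    pow_pos (by linarith : (0 : ℝ) < x) 2, pow_pos (by linarith : (0 : ℝ) < x + 1) 3]

lemma le_div_sq_of_le_sub_mul_sqrt {ε : ℕ → ℝ} {c C : ℝ} (hC : 6 ≤ c * √C)
    (hnonneg : ∀ n, 1 ≤ n → 0 ≤ ε n)
    (hstep : ∀ n, 1 ≤ n → ε (n + 1) ≤ ε n - c * (ε n * √(ε n))) (h1 : ε 1 ≤ C) :
    ∀ n, 1 ≤ n → ε n ≤ C / (n : ℝ) ^ 2 := by
  have hC0 : 0 < C := by
    by_contra! h
    rw [sqrt_eq_zero'.2 h] at hC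
    linarith
  have hc0 : 0 < c := by
    by_contra! h
    nlinarith [sqrt_nonneg C]
  refine Nat.le_induction (by simpa using h1) fun n hn ih ↦ ?_
  have hx : (1 : ℝ) ≤ n := by exact_mod_cast hn
  push_cast
  have hdrop : ε (n + 1) ≤ ε n := by
    have := mul_nonneg hc0.le (mul_nonneg (hnonneg n hn) (sqrt_nonneg (ε n)))
    linarith [hstep n hn]
  rcases le_or_gt (ε n) (C / (n + 1) ^ 2) with hsmall | hlarge
  · exact hdrop.trans hsmall
  · have hsqrt : √C / (n + 1) ≤ √(ε n) := by
      rw [← sqrt_sq (by positivity : (0 : ℝ) ≤ n + 1), ← sqrt_div' _ (sq_nonneg _)]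
      exact sqrt_le_sqrt hlarge.le
    have hdec : 6 * C / (n + 1) ^ 3 ≤ c * (ε n * √(ε n)) := by
      calc 6 * C / (n + 1) ^ 3 ≤ c * √C * C / (n + 1) ^ 3 := by gcongr
        _ = c * (C / (n + 1) ^ 2 * (√C / (n + 1))) := by field_simp
        _ ≤ c * (ε n * √(ε n)) := by have := hnonneg n hn; gcongr
    have hgap := mul_le_mul_of_nonneg_left (inv_sq_sub_inv_succ_sq_le hx) hC0.le
    have e₁ : C * (1 / n ^ 2 - 1 / (n + 1) ^ 2) = C / n ^ 2 - C / (n + 1) ^ 2 := by ring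
    have e₂ : C * (6 / (n + 1) ^ 3) = 6 * C / (n + 1) ^ 3 := by ring
    linarith [hstep n hn]

/-- The iterates K_ℓ = σ̂(K_{ℓ-1}) from K₀ ∈ [-1,1) satisfy 1 - K_ℓ ≤ C/ℓ²
for some constant C > 0 and all ℓ ≥ 1. -/
theorem iterates_rate (K₀ : ℝ) (h : K₀ ∈ Set.Ico (-1 : ℝ) 1)
    (K : ℕ → ℝ) (h0 : K 0 = K₀) (hrec : ∀ ℓ : ℕ, K (ℓ + 1) = hatSigma (K ℓ)) :
    ∃ C : ℝ, 0 < C ∧ ∀ ℓ : ℕ, 1 ≤ ℓ → 1 - K ℓ ≤ C / (ℓ : ℝ) ^ 2 := by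
  have hmem : ∀ ℓ, 1 ≤ ℓ → K ℓ ∈ Set.Icc 0 1 := by
    refine Nat.le_induction ?_ fun n _ ih ↦ ?_ <;> rw [hrec]
    · exact ⟨hatSigma_nonneg (h0 ▸ h.1) (h0 ▸ h.2.le), hatSigma_le_one (h0 ▸ h.1) (h0 ▸ h.2.le)⟩
    · exact ⟨hatSigma_nonneg (by linarith [ih.1]) ih.2, hatSigma_le_one (by linarith [ih.1]) ih.2⟩
  have hsqrt : √1296 = 36 := by
    rw [show (1296 : ℝ) = 36 ^ 2 by norm_num, sqrt_sq (by norm_num)]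
  refine ⟨1296, by norm_num, le_div_sq_of_le_sub_mul_sqrt (c := 1 / 6) (by rw [hsqrt]; norm_num)
    (fun n hn ↦ sub_nonneg.2 (hmem n hn).2) (fun n hn ↦ ?_) (by linarith [(hmem 1 le_rfl).1])⟩
  rw [hrec]
  linarith [one_sub_hatSigma_le (hmem n hn).1 (hmem n hn).2]
end

section
/- Let S₀ ∈ [-1,1] and for L ≥ 1 with α² = 1/L², define S_{ℓ} = (S_{ℓ-1} + α²σ̂(S_{ℓ-1}))/(1+α²) for ℓ = 1,…,L, where σ̂(ρ) = (√(1-ρ²)+(π-arccos ρ)ρ)/π. Then the sequence (S_ℓ) is nondecreasing and satisfies S_ℓ ≤ S₀ + (σ̂(S₀) − S₀)·ℓ/L² for all 0 ≤ ℓ ≤ L. -/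
open Real

/-!
On `[-1, 1]` the derivative of `σ̂` is `(π - arccos ρ) / π ∈ [0, 1]`, so `σ̂` is monotone and
`σ̂ - id` is antitone; with `σ̂ 1 = 1` this gives `ρ ≤ σ̂ ρ ≤ 1`. The recursion replaces `S` by a
convex combination of `S` and `σ̂ S`, so `S` stays in `[-1, 1]` and increases, by exactly
`α² (σ̂ S - S) / (1 + α²) ≤ α² (σ̂ S - S)` per step. Since `σ̂ - id` is antitone and `S ≥ S₀`,
each increment is at most `α² (σ̂ S₀ - S₀)`.
-/

open Set

section Relaxation

variable {a x y : ℝ}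

lemma le_relax (ha : 0 ≤ a) (hxy : x ≤ y) : x ≤ (x + a * y) / (1 + a) := by
  rw [le_div_iff₀ (by linarith)]
  nlinarith

lemma relax_le (ha : 0 ≤ a) (hxy : x ≤ y) : (x + a * y) / (1 + a) ≤ y := by
  rw [div_le_iff₀ (by linarith)]
  nlinarith

lemma relax_sub_le (ha : 0 ≤ a) (hxy : x ≤ y) : (x + a * y) / (1 + a) - x ≤ a * (y - x) := by
  rw [sub_le_iff_le_add, div_le_iff₀ (by linarith)]
  nlinarith [mul_nonneg (mul_nonneg ha ha) (sub_nonneg.2 hxy)]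

variable {s : Set ℝ} {g : ℝ → ℝ} {S : ℕ → ℝ}

lemma relax_iterate_mem [s.OrdConnected] (hle : ∀ x ∈ s, x ≤ g x) (hmaps : MapsTo g s s)
    (ha : 0 ≤ a) (h0 : S 0 ∈ s) (hrec : ∀ n, S (n + 1) = (S n + a * g (S n)) / (1 + a))
    (n : ℕ) : S n ∈ s := by
  induction n with
  | zero => exact h0
  | succ n ih =>
    have hx := hle _ ih
    exact Set.OrdConnected.out ‹_› ih (hmaps ih)
      ⟨hrec n ▸ le_relax ha hx, hrec n ▸ relax_le ha hx⟩

lemma relax_iterate_monotone [s.OrdConnected] (hle : ∀ x ∈ s, x ≤ g x) (hmaps : MapsTo g s s)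
    (ha : 0 ≤ a) (h0 : S 0 ∈ s) (hrec : ∀ n, S (n + 1) = (S n + a * g (S n)) / (1 + a)) :
    Monotone S :=
  monotone_nat_of_le_succ fun n =>
    hrec n ▸ le_relax ha (hle _ (relax_iterate_mem hle hmaps ha h0 hrec n))

lemma relax_iterate_le [s.OrdConnected] (hle : ∀ x ∈ s, x ≤ g x) (hmaps : MapsTo g s s)
    (hanti : AntitoneOn (fun x => g x - x) s) (ha : 0 ≤ a) (h0 : S 0 ∈ s)
    (hrec : ∀ n, S (n + 1) = (S n + a * g (S n)) / (1 + a)) (n : ℕ) :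
    S n ≤ S 0 + (g (S 0) - S 0) * (a * n) := by
  induction n with
  | zero => simp
  | succ n ih =>
    have hmem := relax_iterate_mem hle hmaps ha h0 hrec n
    have hgap : g (S n) - S n ≤ g (S 0) - S 0 :=
      hanti h0 hmem (relax_iterate_monotone hle hmaps ha h0 hrec n.zero_le)
    calc S (n + 1) ≤ S n + a * (g (S n) - S n) := by
          rw [hrec n, ← sub_le_iff_le_add']
          exact relax_sub_le ha (hle _ hmem)
      _ ≤ S 0 + (g (S 0) - S 0) * (a * n) + a * (g (S 0) - S 0) := by gcongr
      _ = S 0 + (g (S 0) - S 0) * (a * ↑(n + 1)) := by push_cast; ring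

end Relaxation

lemma continuous_hatSigma : Continuous hatSigma := by
  unfold hatSigma
  fun_prop

lemma hasDerivAt_hatSigma {x : ℝ} (hx : x ∈ Ioo (-1 : ℝ) 1) :
    HasDerivAt hatSigma ((π - arccos x) / π) x := by
  obtain ⟨hx₁, hx₂⟩ := hx
  have hpos : 0 < 1 - x ^ 2 := by nlinarith
  have hsqrt : HasDerivAt (fun y => √(1 - y ^ 2)) (-(2 * x) / (2 * √(1 - x ^ 2))) x := by
    simpa using ((hasDerivAt_pow 2 x).const_sub 1).sqrt hpos.ne'
  have harccos : HasDerivAt (fun y => π - arccos y) (1 / √(1 - x ^ 2)) x := by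
    simpa using (hasDerivAt_arccos hx₁.ne' hx₂.ne).const_sub π
  refine ((hsqrt.add (harccos.mul (hasDerivAt_id' x))).div_const π).congr_deriv ?_
  have : √(1 - x ^ 2) ≠ 0 := (sqrt_pos.2 hpos).ne'
  field_simp
  ring

lemma hatSigma_one : hatSigma 1 = 1 := by
  simp [hatSigma, pi_ne_zero]

lemma monotoneOn_hatSigma : MonotoneOn hatSigma (Icc (-1) 1) := by
  refine monotoneOn_of_hasDerivWithinAt_nonneg (f' := fun x => (π - arccos x) / π)
    (convex_Icc _ _) continuous_hatSigma.continuousOn (fun x hx => ?_) fun x _ => ?_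
  · rw [interior_Icc] at hx
    exact (hasDerivAt_hatSigma hx).hasDerivWithinAt
  · have := arccos_le_pi x
    positivity

lemma antitoneOn_hatSigma_sub_id : AntitoneOn (fun ρ => hatSigma ρ - ρ) (Icc (-1) 1) := by
  refine antitoneOn_of_hasDerivWithinAt_nonpos (f' := fun x => (π - arccos x) / π - 1)
    (convex_Icc _ _) (continuous_hatSigma.sub continuous_id).continuousOn (fun x hx => ?_)
    fun x _ => ?_
  · rw [interior_Icc] at hx
    exact ((hasDerivAt_hatSigma hx).sub (hasDerivAt_id x)).hasDerivWithinAt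
  · rw [sub_div, div_self pi_ne_zero]
    have : 0 ≤ arccos x / π := div_nonneg (arccos_nonneg x) pi_pos.le
    linarith

lemma le_hatSigma {ρ : ℝ} (hρ : ρ ∈ Icc (-1 : ℝ) 1) : ρ ≤ hatSigma ρ := by
  have := antitoneOn_hatSigma_sub_id hρ (right_mem_Icc.2 (by norm_num)) hρ.2
  simp only [hatSigma_one, sub_self] at this
  linarith

lemma mapsTo_hatSigma : MapsTo hatSigma (Icc (-1) 1) (Icc (-1) 1) := fun ρ hρ =>
  ⟨hρ.1.trans (le_hatSigma hρ),
    hatSigma_one ▸ monotoneOn_hatSigma hρ (right_mem_Icc.2 (by norm_num)) hρ.2⟩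

theorem resnet_S_bounds_general (L : ℕ) (S₀ : ℝ) (hS₀ : S₀ ∈ Set.Icc (-1 : ℝ) 1)
    (S : ℕ → ℝ) (h0 : S 0 = S₀)
    (hrec : ∀ ℓ : ℕ,
      S (ℓ + 1) = (S ℓ + (1 / (L : ℝ) ^ 2) * hatSigma (S ℓ)) / (1 + 1 / (L : ℝ) ^ 2)) :
    (∀ ℓ : ℕ, ℓ < L → S ℓ ≤ S (ℓ + 1)) ∧
    (∀ ℓ : ℕ, ℓ ≤ L → S ℓ ≤ S₀ + (hatSigma S₀ - S₀) * ℓ / (L : ℝ) ^ 2) := by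
  subst h0
  have ha : (0 : ℝ) ≤ 1 / (L : ℝ) ^ 2 := by positivity
  refine ⟨fun ℓ _ => relax_iterate_monotone (fun _ => le_hatSigma) mapsTo_hatSigma ha hS₀ hrec
    ℓ.le_succ, fun ℓ _ => ?_⟩
  calc S ℓ ≤ S 0 + (hatSigma (S 0) - S 0) * (1 / (L : ℝ) ^ 2 * ℓ) :=
        relax_iterate_le (fun _ => le_hatSigma) mapsTo_hatSigma antitoneOn_hatSigma_sub_id ha hS₀
          hrec ℓ
    _ = S 0 + (hatSigma (S 0) - S 0) * ℓ / (L : ℝ) ^ 2 := by ring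

/-- With α² = 1/L², S₀ ∈ [-1,1] and S_ℓ = (S_{ℓ-1} + α²σ̂(S_{ℓ-1}))/(1+α²),
the sequence is nondecreasing and S_ℓ ≤ S₀ + (σ̂(S₀) - S₀)·ℓ/L² for 0 ≤ ℓ ≤ L. -/
theorem resnet_S_bounds (L : ℕ) (hL : 1 ≤ L) (S₀ : ℝ) (hS₀ : S₀ ∈ Set.Icc (-1 : ℝ) 1)
    (S : ℕ → ℝ) (h0 : S 0 = S₀)
    (hrec : ∀ ℓ : ℕ,
      S (ℓ + 1) = (S ℓ + (1 / (L : ℝ) ^ 2) * hatSigma (S ℓ)) / (1 + 1 / (L : ℝ) ^ 2)) :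
    (∀ ℓ : ℕ, ℓ < L → S ℓ ≤ S (ℓ + 1)) ∧
    (∀ ℓ : ℕ, ℓ ≤ L → S ℓ ≤ S₀ + (hatSigma S₀ - S₀) * ℓ / (L : ℝ) ^ 2) :=
  resnet_S_bounds_general L S₀ hS₀ S h0 hrec
end
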